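/- Let n ≥ 3, 0 < m < 1, α ≥ nβ, α > 0, η > 0. If v is a positive global solution on [0,∞) of ((n-1)/m)((v^m)'' + ((n-1)/r)(v^m)') + αv + βrv' = 0 with v(0)=η, v'(0)=0, then (α/(n(n-1))) r² v(r)^{1-m} + r v'(r)/v(r) ≤ 0 for all r > 0; in particular v'(r) < 0 for all r > 0. -/

import Mathlib

/-!
Write `w = v^m`. The equation says `(r^{n-1} w')' = -(m/(n-1)) r^{n-1} (α v + β r v')`, so the
corrected flux `K(r) = r^{n-1} w'(r) + (mα/(n(n-1))) r^n v(r)` vanishes at `0` and has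
`K' = (m/(n-1)) (α/n - β) r^n v'`, while `K = m r^{n-2} v^m (α/(n(n-1)) r² v^{1-m} + r v'/v)`.
Hence if `v' < 0` on `(0, t)`, then `K` is nonincreasing on `[0, t]`, so `K(t) ≤ 0`: this is the
claimed inequality at `t`, and it forces `v'(t) < 0`. Near `0` the source `α v + β r v'` is
positive, so the flux `r^{n-1} w'` decreases from `0` and `v' < 0` there; a first-crossing argument
then gives `v' < 0` on all of `(0, ∞)`.
-/

open Real Set Filter Topology

theorem forall_neg_of_neg_near_zero {f : ℝ → ℝ} (hf : ContinuousOn f (Ioi 0))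
    (hnear : ∀ᶠ r in 𝓝[>] 0, f r < 0)
    (hstep : ∀ t, 0 < t → (∀ s ∈ Ioo 0 t, f s < 0) → f t < 0) :
    ∀ r, 0 < r → f r < 0 := by
  obtain ⟨δ, hδ, hδf⟩ := mem_nhdsGT_iff_exists_Ioo_subset.1 hnear
  intro r hr
  by_contra! hfr
  -- apply `hstep` at the first point of `[δ, ∞)` where `f ≥ 0`
  set Z := Ici δ ∩ f ⁻¹' Ici 0
  have hZ : IsClosed Z :=
    (hf.mono fun x hx => lt_of_lt_of_le hδ hx).preimage_isClosed_of_isClosed isClosed_Ici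
      isClosed_Ici
  have hrZ : r ∈ Z := ⟨not_lt.1 fun h => (hδf ⟨hr, h⟩ : f r < 0).not_ge hfr, hfr⟩
  have hbdd : BddBelow Z := ⟨δ, fun _ hx => hx.1⟩
  have htZ : sInf Z ∈ Z := hZ.csInf_mem ⟨r, hrZ⟩ hbdd
  refine not_lt.2 htZ.2 (hstep _ (lt_of_lt_of_le hδ htZ.1) fun s hs => ?_)
  by_contra! hfs
  rcases lt_or_ge s δ with hsδ | hsδ
  · exact (hδf ⟨hs.1, hsδ⟩ : f s < 0).not_ge hfs
  · exact (csInf_le hbdd ⟨hsδ, hfs⟩).not_gt hs.2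

/-- The derivative is taken within `[0, ∞)` so that the flux is continuous up to `r = 0`;
nothing is assumed about `w` on the negative reals. -/
noncomputable def radialFlux (n : ℕ) (w : ℝ → ℝ) (r : ℝ) : ℝ :=
  r ^ (n - 1) * derivWithin w (Ici 0) r

section RadialFlux

variable {n : ℕ} {w : ℝ → ℝ}

theorem radialFlux_zero (hn : 2 ≤ n) (w : ℝ → ℝ) : radialFlux n w 0 = 0 := by
  simp [radialFlux, zero_pow (by omega : n - 1 ≠ 0)]

theorem continuousOn_radialFlux (hw : ContDiffOn ℝ 1 w (Ici 0)) :
    ContinuousOn (radialFlux n w) (Ici 0) :=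
  (continuous_pow _).continuousOn.mul
    (hw.continuousOn_derivWithin (uniqueDiffOn_Ici 0) le_rfl)

theorem radialFlux_eq {r : ℝ} (hr : 0 < r) : radialFlux n w r = r ^ (n - 1) * deriv w r := by
  rw [radialFlux, derivWithin_of_mem_nhds (Ici_mem_nhds hr)]

theorem hasDerivAt_radialFlux (hn : 1 ≤ n) (hw : ContDiffOn ℝ 2 w (Ici 0)) {r : ℝ}
    (hr : 0 < r) :
    HasDerivAt (radialFlux n w)
      (r ^ (n - 1) * (deriv (deriv w) r + ((n : ℝ) - 1) / r * deriv w r)) r := by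
  have hw' : DifferentiableAt ℝ (deriv w) r :=
    (((hw.mono Ioi_subset_Ici_self).deriv_of_isOpen isOpen_Ioi le_rfl).differentiableOn
      one_ne_zero).differentiableAt (Ioi_mem_nhds hr)
  have hflux : radialFlux n w =ᶠ[𝓝 r] fun s => s ^ (n - 1) * deriv w s := by
    filter_upwards [Ioi_mem_nhds hr] with s hs using radialFlux_eq hs
  refine (((hasDerivAt_pow (n - 1) r).mul hw'.hasDerivAt).congr_of_eventuallyEq
    hflux).congr_deriv ?_
  obtain ⟨k, rfl⟩ : ∃ k, n = k + 1 := ⟨n - 1, by omega⟩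
  rcases k with _ | k
  · simp
  · simp only [Nat.add_sub_cancel, Nat.cast_add, Nat.cast_one, add_sub_cancel_right, pow_succ]
    field_simp
    ring

end RadialFlux

structure IsPosRadialSolution (n : ℕ) (m α β : ℝ) (v : ℝ → ℝ) : Prop where
  pos : ∀ r, 0 ≤ r → 0 < v r
  contDiffOn : ContDiffOn ℝ 2 v (Ici 0)
  ode : ∀ r, 0 < r →
    ((n : ℝ) - 1) / m *
        (deriv (deriv (fun s => v s ^ m)) r + ((n : ℝ) - 1) / r * deriv (fun s => v s ^ m) r)
      + α * v r + β * r * deriv v r = 0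

/-- The coefficient `mα/(n(n-1))` is chosen so that the `α v` terms cancel in the derivative. -/
noncomputable def correctedFlux (n : ℕ) (m α : ℝ) (v : ℝ → ℝ) (r : ℝ) : ℝ :=
  radialFlux n (fun s => v s ^ m) r + m * α / (n * ((n : ℝ) - 1)) * (r ^ n * v r)

theorem correctedFlux_zero {n : ℕ} (hn : 2 ≤ n) (m α : ℝ) (v : ℝ → ℝ) :
    correctedFlux n m α v 0 = 0 := by
  simp [correctedFlux, radialFlux_zero hn, zero_pow (by omega : n ≠ 0)]

namespace IsPosRadialSolution

variable {n : ℕ} {m α β : ℝ} {v : ℝ → ℝ} (hsol : IsPosRadialSolution n m α β v)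
include hsol

theorem hasDerivAt {r : ℝ} (hr : 0 < r) : HasDerivAt v (deriv v r) r :=
  ((hsol.contDiffOn r hr.le).contDiffAt (Ici_mem_nhds hr)).differentiableAt
    two_ne_zero |>.hasDerivAt

theorem continuousOn_deriv : ContinuousOn (deriv v) (Ioi 0) :=
  ((hsol.contDiffOn.mono Ioi_subset_Ici_self).deriv_of_isOpen isOpen_Ioi
    (m := 1) (by norm_num)).continuousOn

theorem contDiffOn_rpow : ContDiffOn ℝ 2 (fun s => v s ^ m) (Ici 0) :=
  hsol.contDiffOn.rpow_const_of_ne fun r hr => (hsol.pos r hr).ne'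

theorem radialFlux_eq {r : ℝ} (hr : 0 < r) :
    radialFlux n (fun s => v s ^ m) r = r ^ (n - 1) * (m * v r ^ (m - 1) * deriv v r) := by
  rw [_root_.radialFlux_eq hr,
    ((hsol.hasDerivAt hr).rpow_const (.inl (hsol.pos r hr.le).ne')).deriv]
  ring

theorem deriv_neg_of_radialFlux_neg (hm : 0 < m) {r : ℝ} (hr : 0 < r)
    (h : radialFlux n (fun s => v s ^ m) r < 0) : deriv v r < 0 := by
  rw [hsol.radialFlux_eq hr] at h
  have := hsol.pos r hr.le
  exact neg_of_mul_neg_right (neg_of_mul_neg_right h (by positivity)) (by positivity)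

theorem hasDerivAt_radialFlux (hn : 2 ≤ n) (hm : m ≠ 0) {r : ℝ} (hr : 0 < r) :
    HasDerivAt (radialFlux n (fun s => v s ^ m))
      (-(m / ((n : ℝ) - 1)) * r ^ (n - 1) * (α * v r + β * r * deriv v r)) r := by
  refine (_root_.hasDerivAt_radialFlux (by omega) hsol.contDiffOn_rpow hr).congr_deriv ?_
  have hn1 : (n : ℝ) - 1 ≠ 0 := (sub_pos.2 (Nat.one_lt_cast.2 hn)).ne'
  have hdiv : deriv (deriv (fun s => v s ^ m)) r + ((n : ℝ) - 1) / r * deriv (fun s => v s ^ m) r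
      = -(m / ((n : ℝ) - 1)) * (α * v r + β * r * deriv v r) := by
    have := hsol.ode r hr
    field_simp at this ⊢
    linear_combination this
  rw [hdiv]
  ring

theorem eventually_source_pos (hα : 0 < α) :
    ∀ᶠ r in 𝓝[>] 0, 0 < α * v r + β * r * deriv v r := by
  have hcont : ContinuousWithinAt (fun s => α * v s + β * s * derivWithin v (Ici 0) s)
      (Ici 0) 0 :=
    ((continuousWithinAt_const.mul (hsol.contDiffOn.continuousOn 0 self_mem_Ici)).add
      ((continuousWithinAt_const.mul continuousWithinAt_id).mul
        (hsol.contDiffOn.continuousOn_derivWithin (uniqueDiffOn_Ici 0) one_le_two 0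
          self_mem_Ici)))
  have hpos : ∀ᶠ s in 𝓝[≥] 0, 0 < α * v s + β * s * derivWithin v (Ici 0) s :=
    hcont.eventually_const_lt (by simpa using mul_pos hα (hsol.pos 0 le_rfl))
  filter_upwards [nhdsWithin_mono _ Ioi_subset_Ici_self hpos, self_mem_nhdsWithin]
    with s hs hs0
  rwa [derivWithin_of_mem_nhds (Ici_mem_nhds hs0)] at hs

theorem eventually_deriv_neg (hn : 2 ≤ n) (hm : 0 < m) (hα : 0 < α) :
    ∀ᶠ r in 𝓝[>] 0, deriv v r < 0 := by
  obtain ⟨δ, hδ, hsrc⟩ := mem_nhdsGT_iff_exists_Ioo_subset.1 (hsol.eventually_source_pos hα)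
  have hanti : StrictAntiOn (radialFlux n (fun s => v s ^ m)) (Ico 0 δ) := by
    refine strictAntiOn_of_hasDerivWithinAt_neg (convex_Ico 0 δ)
      (f' := fun r => -(m / ((n : ℝ) - 1)) * r ^ (n - 1) * (α * v r + β * r * deriv v r))
      ((continuousOn_radialFlux (hsol.contDiffOn_rpow.of_le one_le_two)).mono Ico_subset_Ici_self)
      (fun r hr => ?_) (fun r hr => ?_)
    · rw [interior_Ico] at hr
      exact (hsol.hasDerivAt_radialFlux hn hm.ne' hr.1).hasDerivWithinAt
    · rw [interior_Ico] at hr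
      have hn1 : 0 < (n : ℝ) - 1 := sub_pos.2 (Nat.one_lt_cast.2 hn)
      have hS : 0 < α * v r + β * r * deriv v r := hsrc hr
      simp only [neg_mul]
      exact neg_neg_of_pos (mul_pos (mul_pos (div_pos hm hn1) (pow_pos hr.1 _)) hS)
  filter_upwards [Ioo_mem_nhdsGT hδ] with r hr
  refine hsol.deriv_neg_of_radialFlux_neg hm hr.1 ?_
  simpa [radialFlux_zero hn] using hanti ⟨le_rfl, hδ⟩ ⟨hr.1.le, hr.2⟩ hr.1

theorem continuousOn_correctedFlux : ContinuousOn (correctedFlux n m α v) (Ici 0) :=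
  (continuousOn_radialFlux (hsol.contDiffOn_rpow.of_le one_le_two)).add
    (continuousOn_const.mul ((continuous_pow n).continuousOn.mul hsol.contDiffOn.continuousOn))

theorem hasDerivAt_correctedFlux (hn : 2 ≤ n) (hm : m ≠ 0) {r : ℝ} (hr : 0 < r) :
    HasDerivAt (correctedFlux n m α v)
      (m / ((n : ℝ) - 1) * (α / n - β) * (r ^ n * deriv v r)) r := by
  refine ((hsol.hasDerivAt_radialFlux hn hm hr).add
    (((hasDerivAt_pow n r).mul (hsol.hasDerivAt hr)).const_mul _)).congr_deriv ?_
  obtain ⟨k, rfl⟩ : ∃ k, n = k + 2 := ⟨n - 2, by omega⟩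
  simp only [Nat.cast_add, Nat.cast_ofNat, show k + 2 - 1 = k + 1 by omega]
  field_simp
  ring

theorem correctedFlux_nonpos (hn : 2 ≤ n) (hm : 0 < m) (hαβ : (n : ℝ) * β ≤ α) {t : ℝ}
    (ht : 0 < t) (hneg : ∀ s ∈ Ioo 0 t, deriv v s < 0) : correctedFlux n m α v t ≤ 0 := by
  have hn1 : 0 < (n : ℝ) - 1 := sub_pos.2 (Nat.one_lt_cast.2 hn)
  have hcoef : 0 ≤ m / ((n : ℝ) - 1) * (α / n - β) := by
    refine mul_nonneg (div_pos hm hn1).le (sub_nonneg.2 ((le_div_iff₀ (by linarith)).2 ?_))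
    linarith
  have hanti : AntitoneOn (correctedFlux n m α v) (Icc 0 t) := by
    refine antitoneOn_of_hasDerivWithinAt_nonpos (convex_Icc 0 t)
      (f' := fun s => m / ((n : ℝ) - 1) * (α / n - β) * (s ^ n * deriv v s))
      (hsol.continuousOn_correctedFlux.mono Icc_subset_Ici_self) (fun s hs => ?_) (fun s hs => ?_)
    · rw [interior_Icc] at hs
      exact (hsol.hasDerivAt_correctedFlux hn hm.ne' hs.1).hasDerivWithinAt
    · rw [interior_Icc] at hs
      exact mul_nonpos_of_nonneg_of_nonpos hcoef
        (mul_nonpos_of_nonneg_of_nonpos (pow_pos hs.1 n).le (hneg s hs).le)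
  simpa [correctedFlux_zero hn] using hanti ⟨le_rfl, ht.le⟩ ⟨ht.le, le_rfl⟩ ht.le

theorem correctedFlux_eq_mul (hn : 2 ≤ n) {r : ℝ} (hr : 0 < r) :
    correctedFlux n m α v r = m * r ^ (n - 2) * v r ^ m *
      (α / (n * ((n : ℝ) - 1)) * (r ^ 2 * v r ^ (1 - m)) + r * deriv v r / v r) := by
  have hv := hsol.pos r hr.le
  obtain ⟨k, rfl⟩ : ∃ k, n = k + 2 := ⟨n - 2, by omega⟩
  rw [correctedFlux, hsol.radialFlux_eq hr, show k + 2 - 1 = k + 1 by omega, Nat.add_sub_cancel]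
  have h1 : v r ^ m * v r ^ (1 - m) = v r := by
    rw [← rpow_add hv, add_sub_cancel, rpow_one]
  have h2 : v r ^ m / v r = v r ^ (m - 1) := by
    rw [rpow_sub_one hv.ne']
  linear_combination (-(m * α / ((k + 2 : ℕ) * (((k + 2 : ℕ) : ℝ) - 1))) * r ^ (k + 2)) * h1
    - (m * r ^ (k + 1) * deriv v r) * h2

theorem deriv_neg_of_nonpos (hn : 2 ≤ n) (hα : 0 < α) {r : ℝ} (hr : 0 < r)
    (h : α / (n * ((n : ℝ) - 1)) * (r ^ 2 * v r ^ (1 - m)) + r * deriv v r / v r ≤ 0) :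
    deriv v r < 0 := by
  have hv := hsol.pos r hr.le
  have hn1 : 0 < (n : ℝ) - 1 := sub_pos.2 (Nat.one_lt_cast.2 hn)
  have hlead : 0 < α / (n * ((n : ℝ) - 1)) * (r ^ 2 * v r ^ (1 - m)) := by positivity
  have hquot : r * deriv v r / v r * v r < 0 := mul_neg_of_neg_of_pos (by linarith) hv
  rw [div_mul_cancel₀ _ hv.ne'] at hquot
  exact neg_of_mul_neg_right hquot hr.le

end IsPosRadialSolution

theorem stmt_3_general (n : ℕ) (m α β : ℝ) (hn : 3 ≤ n)
    (hm0 : 0 < m)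
    (hαβ : α ≥ (n : ℝ) * β) (hα : 0 < α)
    (v : ℝ → ℝ) (hv : ∀ r, 0 ≤ r → 0 < v r)
    (hreg : ContDiffOn ℝ 2 v (Set.Ici 0))
    (hode : ∀ r, 0 < r →
      ((n : ℝ) - 1) / m *
          (deriv (deriv (fun s => v s ^ m)) r
            + ((n : ℝ) - 1) / r * deriv (fun s => v s ^ m) r)
        + α * v r + β * r * deriv v r = 0) :
    ∀ r, 0 < r →
      (α / (n * ((n : ℝ) - 1)) * (r ^ 2 * v r ^ (1 - m)) + r * deriv v r / v r ≤ 0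
        ∧ deriv v r < 0) := by
  have hsol : IsPosRadialSolution n m α β v := ⟨hv, hreg, hode⟩
  have hn2 : 2 ≤ n := by omega
  have hineq : ∀ t, 0 < t → (∀ s ∈ Ioo 0 t, deriv v s < 0) →
      α / (n * ((n : ℝ) - 1)) * (t ^ 2 * v t ^ (1 - m)) + t * deriv v t / v t ≤ 0 := by
    intro t ht hneg
    have hK := hsol.correctedFlux_nonpos hn2 hm0 hαβ ht hneg
    rw [hsol.correctedFlux_eq_mul hn2 ht] at hK
    have := hv t ht.le
    exact nonpos_of_mul_nonpos_right hK (by positivity)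
  have hderiv : ∀ t, 0 < t → deriv v t < 0 :=
    forall_neg_of_neg_near_zero hsol.continuousOn_deriv (hsol.eventually_deriv_neg hn2 hm0 hα)
      fun t ht hneg => hsol.deriv_neg_of_nonpos hn2 hα ht (hineq t ht hneg)
  exact fun r hr => ⟨hineq r hr fun s hs => hderiv s hs.1, hderiv r hr⟩

/-- Differential inequality and monotonicity when α ≥ nβ and α > 0. -/
theorem stmt_3 (n : ℕ) (m α β η : ℝ) (hn : 3 ≤ n)
    (hm0 : 0 < m) (hm1 : m < 1)
    (hαβ : α ≥ (n : ℝ) * β) (hα : 0 < α) (hη : 0 < η)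
    (v : ℝ → ℝ) (hv : ∀ r, 0 ≤ r → 0 < v r)
    (hreg : ContDiffOn ℝ 2 v (Set.Ici 0))
    (hv0 : v 0 = η) (hv'0 : deriv v 0 = 0)
    (hode : ∀ r, 0 < r →
      ((n : ℝ) - 1) / m *
          (deriv (deriv (fun s => v s ^ m)) r
            + ((n : ℝ) - 1) / r * deriv (fun s => v s ^ m) r)
        + α * v r + β * r * deriv v r = 0) :
    ∀ r, 0 < r →
      (α / (n * ((n : ℝ) - 1)) * (r ^ 2 * v r ^ (1 - m)) + r * deriv v r / v r ≤ 0
        ∧ deriv v r < 0) :=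
  stmt_3_general n m α β hn hm0 hαβ hα v hv hreg hode
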